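/- filterACS completeness: Let G = (V,E) be a valid policy and E_σ = filterACS G M E (the greedy ACS filter run over all edges of E). Then for every nonempty X ⊆ E \ (E_σ ∪ backflows(E)), the compliance criterion fails: ¬ (⋃ get_offending_flows (getACS M) (α (V, E, E_σ ∪ X)) ⊆ backflows(E_σ ∪ X) \ E). -/

import Mathlib

def backflows {α : Type*} (X : Set (α × α)) : Set (α × α) :=
  {e | (e.2, e.1) ∈ X}

def offending_flows {α : Type*} (m : Set α → Set (α × α) → Prop)
    (V : Set α) (E : Set (α × α)) : Set (Set (α × α)) :=
  {F | F ⊆ E ∧ ¬ m V E ∧ m V (E \ F) ∧ ∀ e ∈ F, ¬ m V ((E \ F) ∪ {e})}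

def get_offending_flows {α : Type*} (M : Set (Set α → Set (α × α) → Prop))
    (V : Set α) (E : Set (α × α)) : Set (Set (α × α)) :=
  ⋃ m ∈ M, offending_flows m V E

inductive Strategy : Type
  | IFS : Strategy
  | ACS : Strategy

structure SecurityInvariant (α : Type*) where
  pred : Set α → Set (α × α) → Prop
  strat : Strategy

/-- the predicates of the IFS-tagged invariants -/
def getIFS {α : Type*} (M : Set (SecurityInvariant α)) :
    Set (Set α → Set (α × α) → Prop) :=
  {f | ∃ m ∈ M, m.strat = Strategy.IFS ∧ f = m.pred}

/-- the predicates of the ACS-tagged invariants -/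
def getACS {α : Type*} (M : Set (SecurityInvariant α)) :
    Set (Set α → Set (α × α) → Prop) :=
  {f | ∃ m ∈ M, m.strat = Strategy.ACS ∧ f = m.pred}

open Classical in
/-- greedy IFS filter; list accumulators are read as sets via `{x | x ∈ ·}` -/
noncomputable def filterIFS {α : Type*} (V : Set α) (E : Set (α × α))
    (M : Set (SecurityInvariant α)) :
    List (α × α) → List (α × α) → List (α × α)
  | a, [] => a
  | a, e :: es =>
    if ∀ m ∈ getIFS M,
        m V (E ∪ {x | x ∈ e :: a} ∪ backflows {x | x ∈ e :: a})
    then filterIFS V E M (e :: a) es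
    else filterIFS V E M a es

open Classical in
/-- greedy ACS filter -/
noncomputable def filterACS {α : Type*} (V : Set α) (E : Set (α × α))
    (M : Set (SecurityInvariant α)) :
    List (α × α) → List (α × α) → List (α × α)
  | a, [] => a
  | a, e :: es =>
    if e ∉ backflows E ∧
        ∀ F ∈ get_offending_flows (getACS M) V
            (E ∪ {x | x ∈ e :: a} ∪ backflows {x | x ∈ e :: a}),
          F ⊆ backflows {x | x ∈ e :: a}
    then filterACS V E M (e :: a) es
    else filterACS V E M a es

/-!
Pick an edge `e ∈ X`. The filter rejected `e` against some accumulator `a' ⊆ E_σ`, and since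
`e ∉ backflows E` this means that some ACS invariant has an offending flow `F` in
`α (V, E, e :: a')` containing an edge `x ∉ backflows (e :: a')`; as `F` lies in that graph,
`x ∈ E`. The graph `α (V, E, E_σ ∪ X)` is finite and contains `α (V, E, e :: a')`, and by
monotonicity an edge of an offending flow stays in some offending flow of any finite
supergraph. So `x ∈ E` is offending for `E_σ ∪ X`, which the compliance criterion forbids.
-/

section OffendingFlows

variable {α : Type*} {m : Set α → Set (α × α) → Prop} {V : Set α}

/-- The offending flow is the complement in `C` of a maximal valid `D' ⊇ D` avoiding `x`. -/
lemma exists_mem_offending_flows_of_not_union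
    (hmono : ∀ E₁ E₂ : Set (α × α), m V E₁ → E₂ ⊆ E₁ → m V E₂)
    {C D : Set (α × α)} {x : α × α} (hC : C.Finite) (hDC : D ⊆ C) (hxC : x ∈ C)
    (hD : m V D) (hxD : ¬ m V (D ∪ {x})) :
    ∃ F ∈ offending_flows m V C, x ∈ F := by
  have hxD' : x ∉ D := fun h => hxD (by rwa [Set.union_singleton, Set.insert_eq_of_mem h])
  let S : Set (Set (α × α)) := {D' | D' ⊆ C \ {x} ∧ m V D'}
  have hS : S.Finite := (hC.sdiff.finite_subsets).subset fun _ h => h.1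
  obtain ⟨D', hDD', ⟨hD'C, hD'⟩, hD'max⟩ :=
    hS.exists_le_maximal (a := D) ⟨fun y hy => ⟨hDC hy, fun h => hxD' (h ▸ hy)⟩, hD⟩
  have hbreak : ∀ D'', D ⊆ D'' → ¬ m V (D'' ∪ {x}) := fun D'' h hm =>
    hxD (hmono _ _ hm (Set.union_subset_union_left _ h))
  have hCF : C \ (C \ D') = D' := Set.sdiff_sdiff_cancel_left (hD'C.trans Set.sdiff_subset)
  refine ⟨C \ D', ⟨Set.sdiff_subset, ?_, by rwa [hCF], ?_⟩, hxC, fun h => (hD'C h).2 rfl⟩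
  · exact fun hCm => hbreak D le_rfl (hmono _ _ hCm (Set.union_subset hDC (by simpa)))
  · rintro f ⟨hfC, hfD'⟩ hf
    rw [hCF] at hf
    by_cases hfx : f = x
    · exact hbreak D' hDD' (hfx ▸ hf)
    · have hle : D' ∪ {f} ⊆ D' :=
        hD'max ⟨Set.union_subset hD'C (by simp [hfC, hfx]), hf⟩ Set.subset_union_left
      exact hfD' (hle (Set.mem_union_right _ rfl))

lemma exists_mem_offending_flows_of_subset
    (hmono : ∀ E₁ E₂ : Set (α × α), m V E₁ → E₂ ⊆ E₁ → m V E₂)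
    {C₁ C₂ F : Set (α × α)} {x : α × α}
    (hF : F ∈ offending_flows m V C₁) (hxF : x ∈ F)
    (hC : C₁ ⊆ C₂) (hC₂ : C₂.Finite) :
    ∃ F' ∈ offending_flows m V C₂, x ∈ F' :=
  exists_mem_offending_flows_of_not_union hmono hC₂ (Set.sdiff_subset.trans hC)
    (hC (hF.1 hxF)) hF.2.2.1 (hF.2.2.2 x hxF)

end OffendingFlows

lemma backflows_mono {α : Type*} {S T : Set (α × α)} (h : S ⊆ T) :
    backflows S ⊆ backflows T := fun _ he => h he

lemma Set.Finite.backflows {α : Type*} {S : Set (α × α)} (h : S.Finite) :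
    (backflows S).Finite :=
  h.preimage Prod.swap_injective.injOn

section FilterACS

variable {α : Type*} (V : Set α) (E : Set (α × α)) (M : Set (SecurityInvariant α))

def ACSFilterAccepts (a : List (α × α)) (e : α × α) : Prop :=
  e ∉ backflows E ∧
    ∀ F ∈ get_offending_flows (getACS M) V
        (E ∪ {x | x ∈ e :: a} ∪ backflows {x | x ∈ e :: a}),
      F ⊆ backflows {x | x ∈ e :: a}

open Classical in
lemma filterACS_cons (a : List (α × α)) (e : α × α) (es : List (α × α)) :
    filterACS V E M a (e :: es) =
      if ACSFilterAccepts V E M a e then filterACS V E M (e :: a) es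
      else filterACS V E M a es := by
  rw [filterACS]
  exact if_congr Iff.rfl rfl rfl

lemma subset_filterACS (es a : List (α × α)) : a ⊆ filterACS V E M a es := by
  induction es generalizing a with
  | nil => exact List.Subset.refl a
  | cons e es ih =>
    rw [filterACS_cons]
    split_ifs
    · exact List.Subset.trans (List.subset_cons_self e a) (ih _)
    · exact ih a

lemma filterACS_subset (es a : List (α × α)) : filterACS V E M a es ⊆ a ++ es := by
  induction es generalizing a with
  | nil => simp [filterACS]
  | cons e es ih =>
    rw [filterACS_cons]
    split_ifs
    · exact List.Subset.trans (ih _) List.perm_middle.symm.subset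
    · exact List.Subset.trans (ih a) ((List.sublist_cons_self e es).append_left a).subset

lemma exists_not_accepts_of_not_mem_filterACS {es a : List (α × α)} {e : α × α}
    (he : e ∈ es) (hne : e ∉ filterACS V E M a es) :
    ∃ a' ⊆ filterACS V E M a es, ¬ ACSFilterAccepts V E M a' e := by
  induction es generalizing a with
  | nil => simp at he
  | cons e' es ih =>
    rw [filterACS_cons] at hne ⊢
    by_cases hacc : ACSFilterAccepts V E M a e'
    · rw [if_pos hacc] at hne ⊢
      rcases List.mem_cons.mp he with rfl | he
      · exact absurd (subset_filterACS V E M es _ List.mem_cons_self) hne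
      · exact ih he hne
    · rw [if_neg hacc] at hne ⊢
      rcases List.mem_cons.mp he with rfl | he
      · exact ⟨a, subset_filterACS V E M es a, hacc⟩
      · exact ih he hne

end FilterACS

theorem stmt_13_general {α : Type*} (M : Set (SecurityInvariant α))
    (V : Set α) (E : Set (α × α)) (L : List (α × α))
    (h_mono : ∀ m ∈ M, ∀ (V' : Set α) (E₁ E₂ : Set (α × α)),
        m.pred V' E₁ → E₂ ⊆ E₁ → m.pred V' E₂)
    (hL : {x | x ∈ L} = E) :
    ∀ X ⊆ E \ ({x | x ∈ filterACS V E M [] L} ∪ backflows E), X ≠ ∅ →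
      ¬ (⋃₀ get_offending_flows (getACS M) V
            (E ∪ ({x | x ∈ filterACS V E M [] L} ∪ X) ∪
              backflows ({x | x ∈ filterACS V E M [] L} ∪ X)) ⊆
          backflows ({x | x ∈ filterACS V E M [] L} ∪ X) \ E) := by
  intro X hX hXne hcomp
  set Eσ := filterACS V E M [] L
  have hEσX : {x | x ∈ Eσ} ∪ X ⊆ E := Set.union_subset
    (fun y hy => hL ▸ by simpa using filterACS_subset V E M L [] hy) fun y hy => (hX hy).1
  obtain ⟨e, heX⟩ := Set.nonempty_iff_ne_empty.mpr hXne
  obtain ⟨heE, heσ⟩ := hX heX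
  have heL : e ∈ L := by rw [← hL] at heE; exact heE
  obtain ⟨a', ha', hrej⟩ :=
    exists_not_accepts_of_not_mem_filterACS V E M heL fun h => heσ (Or.inl h)
  have hea' : {x | x ∈ e :: a'} ⊆ {x | x ∈ Eσ} ∪ X := by
    rintro y (_ | ⟨_, hy⟩)
    exacts [Or.inr heX, Or.inl (ha' hy)]
  obtain ⟨F, hF, hFb⟩ := not_forall₂.mp (not_and.mp hrej fun h => heσ (Or.inr h))
  obtain ⟨x, hxF, hx⟩ := Set.not_subset.mp hFb
  obtain ⟨_, ⟨m, hm, hACS, rfl⟩, hF⟩ := Set.mem_iUnion₂.mp hF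
  have hxE : x ∈ E := by
    rcases hF.1 hxF with (hxE | hxa') | hxb
    exacts [hxE, (hea'.trans hEσX) hxa', absurd hxb hx]
  have hfin : (E ∪ ({x | x ∈ Eσ} ∪ X) ∪ backflows ({x | x ∈ Eσ} ∪ X)).Finite := by
    have hE : E.Finite := hL ▸ L.finite_toSet
    exact (hE.union (hE.subset hEσX)).union (hE.subset hEσX).backflows
  obtain ⟨F', hF', hxF'⟩ := exists_mem_offending_flows_of_subset (h_mono m hm V) hF hxF
    (Set.union_subset_union (Set.union_subset_union_right E hea') (backflows_mono hea')) hfin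
  have hxσ : x ∈ ⋃₀ get_offending_flows (getACS M) V
      (E ∪ ({x | x ∈ Eσ} ∪ X) ∪ backflows ({x | x ∈ Eσ} ∪ X)) :=
    ⟨F', Set.mem_iUnion₂.mpr ⟨m.pred, ⟨m, hm, hACS, rfl⟩, hF'⟩, hxF'⟩
  exact (hcomp hxσ).2 hxE

theorem stmt_13 {α : Type*} (M : Set (SecurityInvariant α))
    (V : Set α) (E : Set (α × α)) (L : List (α × α))
    (h_empty : ∀ m ∈ M, ∀ V' : Set α, m.pred V' ∅)
    (h_mono : ∀ m ∈ M, ∀ (V' : Set α) (E₁ E₂ : Set (α × α)),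
        m.pred V' E₁ → E₂ ⊆ E₁ → m.pred V' E₂)
    (h_valid : ∀ m ∈ M, m.pred V E)
    (hL : {x | x ∈ L} = E) :
    ∀ X ⊆ E \ ({x | x ∈ filterACS V E M [] L} ∪ backflows E), X ≠ ∅ →
      ¬ (⋃₀ get_offending_flows (getACS M) V
            (E ∪ ({x | x ∈ filterACS V E M [] L} ∪ X) ∪
              backflows ({x | x ∈ filterACS V E M [] L} ∪ X)) ⊆
          backflows ({x | x ∈ filterACS V E M [] L} ∪ X) \ E) :=
  stmt_13_general M V E L h_mono hL
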